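/- Let Inv(R̄)_+ be the set of invertible and nonnegative elements of the ring R̄ of Colombeau generalized real numbers. Then Inv(R̄)_+ is an open subset of R̄ in the sharp topology, and it is closed under multiplication and multiplicative inverses. -/

import Mathlib

noncomputable section

open Real

/-- `P ε` holds for all sufficiently small `ε ∈ (0,1]`. -/
def SmallEv (P : ℝ → Prop) : Prop :=
  ∃ η : ℝ, 0 < η ∧ ∀ ε : ℝ, 0 < ε → ε ≤ η → P ε

/-- A net `x : (0,1] → ℝ` (modeled on all of `ℝ`) is moderate. -/
def Moderate (x : ℝ → ℝ) : Prop :=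
  ∃ r : ℝ, SmallEv fun ε => |x ε| < ε ^ r

/-- A net is negligible. -/
def Negligible (x : ℝ → ℝ) : Prop :=
  ∀ n : ℕ, SmallEv fun ε => |x ε| < ε ^ (n : ℝ)

lemma smallEv_and {P Q : ℝ → Prop} (hP : SmallEv P) (hQ : SmallEv Q) :
    SmallEv fun ε => P ε ∧ Q ε := by
  obtain ⟨a, ha, hP⟩ := hP
  obtain ⟨b, hb, hQ⟩ := hQ
  exact ⟨min a b, lt_min ha hb, fun ε hε hle =>
    ⟨hP ε hε (hle.trans (min_le_left _ _)), hQ ε hε (hle.trans (min_le_right _ _))⟩⟩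

lemma moderate_zero : Moderate (0 : ℝ → ℝ) :=
  ⟨0, 1, one_pos, fun ε hε _ => by simp⟩

lemma moderate_one : Moderate (1 : ℝ → ℝ) := by
  refine ⟨-1, 1/2, by norm_num, fun ε hε hle => ?_⟩
  have h1 : ε < 1 := lt_of_le_of_lt hle (by norm_num)
  show |(1 : ℝ → ℝ) ε| < ε ^ (-1 : ℝ)
  rw [Real.rpow_neg_one]
  simpa using (one_lt_inv₀ hε).mpr h1

lemma moderate_neg {x : ℝ → ℝ} (hx : Moderate x) : Moderate (-x) := by
  obtain ⟨r, η, hη, h⟩ := hx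
  exact ⟨r, η, hη, fun ε hε hle => by simpa using h ε hε hle⟩

lemma moderate_add {x y : ℝ → ℝ} (hx : Moderate x) (hy : Moderate y) :
    Moderate (x + y) := by
  obtain ⟨r, hr⟩ := hx
  obtain ⟨s, hs⟩ := hy
  obtain ⟨η, hη, h⟩ := smallEv_and hr hs
  refine ⟨min r s - 1, min η (1/2), lt_min hη (by norm_num), fun ε hε hle => ?_⟩
  have hεhalf : ε ≤ 1/2 := hle.trans (min_le_right _ _)
  have hε1 : ε ≤ 1 := hεhalf.trans (by norm_num)
  obtain ⟨h1, h2⟩ := h ε hε (hle.trans (min_le_left _ _))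
  have h2inv : (2 : ℝ) ≤ ε⁻¹ := by
    rw [le_inv_comm₀ (by norm_num) hε]
    linarith
  calc |(x + y) ε| ≤ |x ε| + |y ε| := abs_add_le _ _
    _ < ε ^ r + ε ^ s := add_lt_add h1 h2
    _ ≤ ε ^ min r s + ε ^ min r s :=
        add_le_add (Real.rpow_le_rpow_of_exponent_ge hε hε1 (min_le_left _ _))
          (Real.rpow_le_rpow_of_exponent_ge hε hε1 (min_le_right _ _))
    _ = 2 * ε ^ min r s := by ring
    _ ≤ ε⁻¹ * ε ^ min r s :=
        mul_le_mul_of_nonneg_right h2inv (Real.rpow_nonneg hε.le _)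
    _ = ε ^ (min r s - 1) := by
        rw [← Real.rpow_neg_one ε, ← Real.rpow_add hε]
        ring_nf

lemma moderate_mul {x y : ℝ → ℝ} (hx : Moderate x) (hy : Moderate y) :
    Moderate (x * y) := by
  obtain ⟨r, hr⟩ := hx
  obtain ⟨s, hs⟩ := hy
  obtain ⟨η, hη, h⟩ := smallEv_and hr hs
  refine ⟨r + s, η, hη, fun ε hε hle => ?_⟩
  obtain ⟨h1, h2⟩ := h ε hε hle
  have : |(x * y) ε| = |x ε| * |y ε| := by simp [abs_mul]
  rw [this, Real.rpow_add hε]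
  exact mul_lt_mul'' h1 h2 (abs_nonneg _) (abs_nonneg _)

/-- The ring `E_M` of moderate nets, as a subring of `ℝ → ℝ`. -/
def EMring : Subring (ℝ → ℝ) where
  carrier := {x | Moderate x}
  mul_mem' := moderate_mul
  one_mem' := moderate_one
  add_mem' := moderate_add
  zero_mem' := moderate_zero
  neg_mem' := moderate_neg

lemma negligible_zero : Negligible (0 : ℝ → ℝ) := fun n =>
  ⟨1, one_pos, fun ε hε _ => by simpa using Real.rpow_pos_of_pos hε (n : ℝ)⟩

lemma negligible_add {x y : ℝ → ℝ} (hx : Negligible x) (hy : Negligible y) :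
    Negligible (x + y) := by
  intro n
  obtain ⟨η, hη, h⟩ := smallEv_and (hx (n + 1)) (hy (n + 1))
  refine ⟨min η (1/2), lt_min hη (by norm_num), fun ε hε hle => ?_⟩
  have hεhalf : ε ≤ 1/2 := hle.trans (min_le_right _ _)
  obtain ⟨h1, h2⟩ := h ε hε (hle.trans (min_le_left _ _))
  have hcast : ((n + 1 : ℕ) : ℝ) = (n : ℝ) + 1 := by push_cast; ring
  have hsplit : ε ^ ((n + 1 : ℕ) : ℝ) = ε ^ (n : ℝ) * ε := by
    rw [hcast, Real.rpow_add hε, Real.rpow_one]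
  calc |(x + y) ε| ≤ |x ε| + |y ε| := abs_add_le _ _
    _ < ε ^ ((n + 1 : ℕ) : ℝ) + ε ^ ((n + 1 : ℕ) : ℝ) := add_lt_add h1 h2
    _ = (2 * ε) * ε ^ (n : ℝ) := by rw [hsplit]; ring
    _ ≤ 1 * ε ^ (n : ℝ) := by
        apply mul_le_mul_of_nonneg_right _ (Real.rpow_nonneg hε.le _)
        linarith
    _ = ε ^ (n : ℝ) := one_mul _

lemma negligible_smul {x y : ℝ → ℝ} (hx : Moderate x) (hy : Negligible y) :
    Negligible (x * y) := by
  intro n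
  obtain ⟨r, hr⟩ := hx
  set k : ℕ := n + Nat.ceil (max 0 (-r)) with hk
  obtain ⟨η, hη, h⟩ := smallEv_and hr (hy k)
  refine ⟨min η 1, lt_min hη one_pos, fun ε hε hle => ?_⟩
  have hε1 : ε ≤ 1 := hle.trans (min_le_right _ _)
  obtain ⟨h1, h2⟩ := h ε hε (hle.trans (min_le_left _ _))
  have hexp : (n : ℝ) ≤ r + (k : ℝ) := by
    have h1' : (-r) ≤ (Nat.ceil (max 0 (-r)) : ℝ) :=
      le_trans (le_max_right 0 (-r)) (Nat.le_ceil _)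
    have : (k : ℝ) = (n : ℝ) + (Nat.ceil (max 0 (-r)) : ℝ) := by
      rw [hk]; push_cast; ring
    linarith
  show |(x * y) ε| < ε ^ (n : ℝ)
  have hxy : |(x * y) ε| = |x ε| * |y ε| := by simp [abs_mul]
  rw [hxy]
  calc |x ε| * |y ε| < ε ^ r * ε ^ (k : ℝ) :=
        mul_lt_mul'' h1 h2 (abs_nonneg _) (abs_nonneg _)
    _ = ε ^ (r + (k : ℝ)) := (Real.rpow_add hε _ _).symm
    _ ≤ ε ^ (n : ℝ) := Real.rpow_le_rpow_of_exponent_ge hε hε1 hexp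

/-- The ideal of negligible nets inside `E_M`. -/
def NegIdeal : Ideal EMring where
  carrier := {x | Negligible x.1}
  add_mem' := fun hx hy => negligible_add hx hy
  zero_mem' := negligible_zero
  smul_mem' := fun c _ hx => negligible_smul c.2 hx

/-- The ring of Colombeau generalized real numbers. -/
abbrev Rbar := EMring ⧸ NegIdeal

/-- Class of a moderate net in `R̄`. -/
def mkR (x : EMring) : Rbar := Ideal.Quotient.mk NegIdeal x

/-- The valuation `V` on the quotient. -/
def VQ (x : Rbar) : ℝ :=
  sSup {r : ℝ | ∃ x' : EMring, mkR x' = x ∧ SmallEv fun ε => |x'.1 ε| < ε ^ r}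

open Classical in
/-- sharp norm on `R̄`. -/
def normQ (x : Rbar) : ℝ := if x = 0 then 0 else Real.exp (-(VQ x))

/-- sharp distance on `R̄`. -/
def sharpDist (x y : Rbar) : ℝ := normQ (x - y)

/-- `x` is nonnegative: it has a representative which is nonnegative on `(0,1]`. -/
def NonnegQ (x : Rbar) : Prop :=
  ∃ x' : EMring, mkR x' = x ∧ ∀ ε : ℝ, 0 < ε → ε ≤ 1 → 0 ≤ x'.1 ε

/-- `x` belongs to `V_r(0)`: some representative satisfies `|x_ε| < ε^r` eventually. -/
def InVr (r : ℝ) (x : Rbar) : Prop :=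
  ∃ x' : EMring, mkR x' = x ∧ SmallEv fun ε => |x'.1 ε| < ε ^ r

/-- `x ≥ α^m`: some representative satisfies `x_ε ≥ ε^m` eventually. -/
def GeAlpha (m : ℝ) (x : Rbar) : Prop :=
  ∃ x' : EMring, mkR x' = x ∧ SmallEv fun ε => ε ^ m ≤ x'.1 ε

lemma idNet_moderate : Moderate (fun ε : ℝ => ε) := by
  refine ⟨0, 1/2, by norm_num, fun ε hε hle => ?_⟩
  show |ε| < ε ^ (0 : ℝ)
  rw [Real.rpow_zero, abs_of_pos hε]
  linarith

/-- The generalized number `α = [ε ↦ ε]`. -/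
def alphaQ : Rbar := mkR ⟨fun ε => ε, idNet_moderate⟩

lemma chi_moderate (S : Set ℝ) : Moderate (S.indicator fun _ => (1 : ℝ)) := by
  refine ⟨-1, 1/2, by norm_num, fun ε hε hle => ?_⟩
  have h1 : ε < 1 := lt_of_le_of_lt hle (by norm_num)
  have hlt : (1 : ℝ) < ε ^ (-1 : ℝ) := by
    rw [Real.rpow_neg_one]
    exact (one_lt_inv₀ hε).mpr h1
  by_cases h : ε ∈ S <;> simp [Set.indicator, h] <;> linarith [hlt]

/-- Hypernatural numbers: moderate nets with values in `ℕ`. -/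
def HyperNat : Type := {f : ℝ → ℕ // Moderate fun ε => (f ε : ℝ)}

/-- Strict order on hypernaturals: eventually pointwise. -/
def HNlt (m n : HyperNat) : Prop := SmallEv fun ε => m.1 ε < n.1 ε


/-- The set of invertible nonnegative generalized numbers. -/
def InvPos (x : Rbar) : Prop := IsUnit x ∧ NonnegQ x

/-! An element of `R̄` is invertible and nonnegative exactly when some representative satisfies
`x_ε ≥ ε^m` for small `ε`: if `x_ε ≥ 0` and `|z_ε| < ε^t` for a representative `z` of `x⁻¹`, then
`x_ε z_ε ≈ 1` forces `x_ε ≥ ε^(1-t)`. Such lower bounds multiply, and they survive adding an element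
of sharp norm below `e^(-(m+1))`, i.e. one with a representative smaller than `ε^(m+1)`, at the
cost of one power of `ε`. An inverse of such an `x` is represented by the nonnegative net
`1 / x_ε`. -/

open Filter Topology

lemma smallEv_iff_eventually {P : ℝ → Prop} : SmallEv P ↔ ∀ᶠ ε in 𝓝[>] (0 : ℝ), P ε := by
  rw [(nhdsGT_basis (0 : ℝ)).eventually_iff]
  constructor
  · rintro ⟨η, hη, h⟩
    exact ⟨η, hη, fun ε hε => h ε hε.1 hε.2.le⟩
  · rintro ⟨η, hη, h⟩
    exact ⟨η / 2, half_pos hη, fun ε hε hle => h ⟨hε, by linarith⟩⟩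

lemma negligible_of_eventually_eq_zero {x : ℝ → ℝ} (h : ∀ᶠ ε in 𝓝[>] (0 : ℝ), x ε = 0) :
    Negligible x := fun n => smallEv_iff_eventually.2 <| by
  filter_upwards [h, self_mem_nhdsWithin] with ε hx (hε : 0 < ε)
  simpa [hx] using rpow_pos_of_pos hε n

lemma eventually_half_le_of_negligible_sub_one {x : ℝ → ℝ} (h : Negligible (x - 1)) :
    ∀ᶠ ε in 𝓝[>] (0 : ℝ), 1 / 2 ≤ x ε := by
  filter_upwards [smallEv_iff_eventually.1 (h 1), Ioo_mem_nhdsGT (by norm_num : (0 : ℝ) < 1 / 2)]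
    with ε hx hε
  simp only [Pi.sub_apply, Pi.one_apply, Nat.cast_one, rpow_one] at hx
  linarith [abs_lt.1 hx, hε.2]

lemma moderate_of_abs_le_rpow {x : ℝ → ℝ} {r : ℝ}
    (h : ∀ᶠ ε in 𝓝[>] (0 : ℝ), |x ε| ≤ ε ^ r) : Moderate x :=
  ⟨r - 1, smallEv_iff_eventually.2 <| by
    filter_upwards [h, Ioo_mem_nhdsGT one_pos] with ε hx hε
    exact hx.trans_lt (rpow_lt_rpow_of_exponent_gt hε.1 hε.2 (by linarith))⟩

lemma rpow_one_sub_le_of_half_le_mul {ε a b t : ℝ} (hε : 0 < ε) (hε2 : ε ≤ 1 / 2)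
    (ha : 0 ≤ a) (hab : 1 / 2 ≤ a * b) (hb : b ≤ ε ^ t) : ε ^ (1 - t) ≤ a := by
  have hinv : ε ^ t * ε ^ (-t) = 1 := by rw [← rpow_add hε, add_neg_cancel, rpow_zero]
  have hsplit : ε ^ (1 - t) = ε * ε ^ (-t) := by
    rw [sub_eq_add_neg, rpow_add hε, rpow_one]
  have hat : 1 / 2 ≤ a * ε ^ t := hab.trans (mul_le_mul_of_nonneg_left hb ha)
  rw [hsplit]
  nlinarith [rpow_pos_of_pos hε (-t)]

lemma mkR_surjective : Function.Surjective mkR := Ideal.Quotient.mk_surjective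

lemma mkR_one : mkR 1 = 1 := map_one _

lemma mkR_add (a b : EMring) : mkR (a + b) = mkR a + mkR b := map_add _ a b

lemma mkR_mul (a b : EMring) : mkR (a * b) = mkR a * mkR b := map_mul _ a b

lemma negligible_sub_of_mkR_eq {a b : EMring} (h : mkR a = mkR b) : Negligible (a.1 - b.1) :=
  Ideal.Quotient.eq.1 h

lemma mkR_eq_of_eventually_eq {a b : EMring} (h : ∀ᶠ ε in 𝓝[>] (0 : ℝ), a.1 ε = b.1 ε) :
    mkR a = mkR b :=
  Ideal.Quotient.eq.2 <| negligible_of_eventually_eq_zero <| h.mono fun _ => sub_eq_zero.2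

lemma InVr.mono {r s : ℝ} {z : Rbar} (h : InVr r z) (hsr : s ≤ r) : InVr s z := by
  obtain ⟨w, hw, hb⟩ := h
  refine ⟨w, hw, smallEv_iff_eventually.2 ?_⟩
  filter_upwards [smallEv_iff_eventually.1 hb, Ioo_mem_nhdsGT one_pos] with ε h hε
  exact h.trans_le (rpow_le_rpow_of_exponent_ge hε.1 hε.2.le hsr)

lemma inVr_of_normQ_lt {z : Rbar} {s : ℝ} (h : normQ z < exp (-s)) : InVr s z := by
  by_cases hz : z = 0
  · subst hz
    exact ⟨0, map_zero _, 1, one_pos, fun ε hε _ => by simpa using rpow_pos_of_pos hε s⟩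
  rw [normQ, if_neg hz, exp_lt_exp, neg_lt_neg_iff] at h
  obtain ⟨w, hw⟩ := mkR_surjective z
  obtain ⟨r, hr⟩ := w.2
  -- `VQ z` is by definition `sSup {r | InVr r z}`
  have hne : {r : ℝ | InVr r z}.Nonempty := ⟨r, w, hw, hr⟩
  obtain ⟨r', hr', hsr'⟩ := exists_lt_of_lt_csSup hne h
  exact InVr.mono hr' hsr'.le

section GeAlpha

variable {m : ℝ} {x : Rbar}

lemma GeAlpha.exists_nonneg_inv (h : GeAlpha m x) :
    ∃ z : EMring, (∀ ε, 0 < ε → 0 ≤ z.1 ε) ∧ x * mkR z = 1 := by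
  obtain ⟨x', rfl, hx'⟩ := h
  have hz : Moderate fun ε => (max (x'.1 ε) (ε ^ m))⁻¹ :=
    moderate_of_abs_le_rpow (r := -m) <| by
      filter_upwards [self_mem_nhdsWithin] with ε (hε : 0 < ε)
      have hpos := (rpow_pos_of_pos hε m).trans_le (le_max_right (x'.1 ε) _)
      rw [abs_of_pos (inv_pos.2 hpos), rpow_neg hε.le]
      exact inv_anti₀ (rpow_pos_of_pos hε m) (le_max_right _ _)
  refine ⟨⟨_, hz⟩, fun ε hε => inv_nonneg.2 ((rpow_pos_of_pos hε m).le.trans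
    (le_max_right _ _)), ?_⟩
  rw [← mkR_mul, ← mkR_one]
  apply mkR_eq_of_eventually_eq
  filter_upwards [smallEv_iff_eventually.1 hx', self_mem_nhdsWithin] with ε hle (hε : 0 < ε)
  show x'.1 ε * (max (x'.1 ε) (ε ^ m))⁻¹ = 1
  rw [max_eq_left hle, mul_inv_cancel₀ ((rpow_pos_of_pos hε m).trans_le hle).ne']

lemma GeAlpha.nonnegQ (h : GeAlpha m x) : NonnegQ x := by
  obtain ⟨x', rfl, hx'⟩ := h
  obtain ⟨r, hr⟩ := x'.2
  have hpos : Moderate fun ε => max (x'.1 ε) 0 := moderate_of_abs_le_rpow (r := r) <| by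
    filter_upwards [smallEv_iff_eventually.1 hr] with ε hε
    refine (abs_le.2 ⟨?_, max_le (le_abs_self _) (abs_nonneg _)⟩).trans hε.le
    linarith [abs_nonneg (x'.1 ε), le_max_right (x'.1 ε) 0]
  refine ⟨⟨_, hpos⟩, ?_, fun ε _ _ => le_max_right _ _⟩
  apply mkR_eq_of_eventually_eq
  filter_upwards [smallEv_iff_eventually.1 hx', self_mem_nhdsWithin] with ε hle (hε : 0 < ε)
  exact max_eq_left ((rpow_pos_of_pos hε m).le.trans hle)

lemma GeAlpha.invPos (h : GeAlpha m x) : InvPos x := by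
  obtain ⟨z, -, hz⟩ := h.exists_nonneg_inv
  exact ⟨IsUnit.of_mul_eq_one _ hz, h.nonnegQ⟩

lemma GeAlpha.mul {k : ℝ} {y : Rbar} (hx : GeAlpha m x) (hy : GeAlpha k y) :
    GeAlpha (m + k) (x * y) := by
  obtain ⟨x', rfl, hx'⟩ := hx
  obtain ⟨y', rfl, hy'⟩ := hy
  refine ⟨x' * y', mkR_mul _ _, smallEv_iff_eventually.2 ?_⟩
  filter_upwards [smallEv_iff_eventually.1 hx', smallEv_iff_eventually.1 hy',
    self_mem_nhdsWithin] with ε hxε hyε (hε : 0 < ε)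
  show ε ^ (m + k) ≤ x'.1 ε * y'.1 ε
  rw [rpow_add hε]
  exact mul_le_mul hxε hyε (rpow_pos_of_pos hε k).le ((rpow_pos_of_pos hε m).le.trans hxε)

lemma GeAlpha.add_of_inVr {z : Rbar} (hx : GeAlpha m x) (hz : InVr (m + 1) z) :
    GeAlpha (m + 1) (x + z) := by
  obtain ⟨x', rfl, hx'⟩ := hx
  obtain ⟨w, rfl, hw⟩ := hz
  refine ⟨x' + w, mkR_add _ _, smallEv_iff_eventually.2 ?_⟩
  filter_upwards [smallEv_iff_eventually.1 hx', smallEv_iff_eventually.1 hw,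
    Ioo_mem_nhdsGT (by norm_num : (0 : ℝ) < 1 / 2)] with ε hxε hwε hε
  have hsplit : ε ^ (m + 1) = ε ^ m * ε := by rw [rpow_add hε.1, rpow_one]
  have hsmall : ε ^ m * ε < ε ^ m * (1 / 2) :=
    mul_lt_mul_of_pos_left hε.2 (rpow_pos_of_pos hε.1 m)
  show ε ^ (m + 1) ≤ x'.1 ε + w.1 ε
  rw [hsplit] at hwε ⊢
  linarith [neg_abs_le (w.1 ε)]

end GeAlpha

lemma InvPos.exists_geAlpha {x : Rbar} (h : InvPos x) : ∃ m, GeAlpha m x := by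
  obtain ⟨⟨u, rfl⟩, x', hx', hnn⟩ := h
  obtain ⟨z', hz'⟩ := mkR_surjective ↑u⁻¹
  obtain ⟨t, ht⟩ := z'.2
  have hprod : Negligible (x'.1 * z'.1 - 1) :=
    negligible_sub_of_mkR_eq (a := x' * z') (b := 1) <| by
      rw [mkR_mul, mkR_one, hx', hz', u.mul_inv]
  refine ⟨1 - t, x', hx', smallEv_iff_eventually.2 ?_⟩
  filter_upwards [eventually_half_le_of_negligible_sub_one hprod, smallEv_iff_eventually.1 ht,
    Ioo_mem_nhdsGT (by norm_num : (0 : ℝ) < 1 / 2)] with ε hhalf hz hε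
  have hx0 : 0 ≤ x'.1 ε := hnn ε hε.1 (by linarith [hε.2])
  exact rpow_one_sub_le_of_half_le_mul hε.1 hε.2.le hx0
    (hhalf.trans (mul_le_mul_of_nonneg_left (le_abs_self _) hx0)) hz.le

/-- `Inv(R̄)₊` is open in the sharp topology and closed under
multiplication and multiplicative inverses. -/
theorem invPos_open_and_multiplicative :
    (∀ x : Rbar, InvPos x → ∃ δ : ℝ, 0 < δ ∧ ∀ y : Rbar, sharpDist y x < δ → InvPos y) ∧
    (∀ x y : Rbar, InvPos x → InvPos y → InvPos (x * y)) ∧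
    (∀ x y : Rbar, InvPos x → x * y = 1 → InvPos y) := by
  refine ⟨fun x hx => ?_, fun x y hx hy => ?_, fun x y hx hxy => ?_⟩
  · obtain ⟨m, hm⟩ := hx.exists_geAlpha
    refine ⟨exp (-(m + 1)), exp_pos _, fun y hy => ?_⟩
    simpa using (hm.add_of_inVr (inVr_of_normQ_lt hy)).invPos
  · obtain ⟨m, hm⟩ := hx.exists_geAlpha
    obtain ⟨k, hk⟩ := hy.exists_geAlpha
    exact (hm.mul hk).invPos
  · obtain ⟨m, hm⟩ := hx.exists_geAlpha
    obtain ⟨z, hz, hxz⟩ := hm.exists_nonneg_inv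
    have hzy : mkR z = y := left_inv_eq_right_inv (by rwa [mul_comm]) hxy
    exact ⟨IsUnit.of_mul_eq_one_right x hxy, z, hzy, fun ε hε _ => hz ε hε⟩
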